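/- Let ρ₁,…,ρ_N be coherent risk measures on real-valued random variables over a finite probability space Ω, and let ρ_o be a coherent risk measure on random variables over the N-point space Ω_N = {1,…,N} with probability mass p. Define ρ_sys[Z] = ρ_o[R_Z] for random vectors Z with N components, where R_Z(i) = ρ_i[Z_i]. Then ρ_sys satisfies the systemic risk axioms A1–A4: convexity, monotonicity (componentwise a.s.), positive homogeneity, and translation equivariance ρ_sys[Z + a·𝕀] = ρ_sys[Z] + a·ρ_sys[𝕀]. -/
import Mathlib


/-- The systemic risk measure ρ_sys[Z] = ρ_o[(ρ_i[Z_i])_i] built from coherent ρ_i and a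
coherent outer measure ρ_o satisfies the systemic axioms A1–A4. -/
theorem stmt_7 {Ω : Type*} [Fintype Ω] {N : ℕ}
    (p : Fin N → ℝ) (hp : ∀ i, 0 < p i) (hpsum : ∑ i, p i = 1)
    (ρi : Fin N → ((Ω → ℝ) → ℝ))
    (hiconv : ∀ i (X Y : Ω → ℝ) (α : ℝ), 0 < α → α < 1 →
      ρi i (α • X + (1 - α) • Y) ≤ α * ρi i X + (1 - α) * ρi i Y)
    (hipos : ∀ i (X : Ω → ℝ) (t : ℝ), 0 < t → ρi i (t • X) = t * ρi i X)
    (himono : ∀ i (X Y : Ω → ℝ), (∀ ω, Y ω ≤ X ω) → ρi i Y ≤ ρi i X)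
    (hitrans : ∀ i (X : Ω → ℝ) (a : ℝ), ρi i (X + fun _ => a) = ρi i X + a)
    (ρo : (Fin N → ℝ) → ℝ)
    (hoconv : ∀ (v w : Fin N → ℝ) (α : ℝ), 0 < α → α < 1 →
      ρo (α • v + (1 - α) • w) ≤ α * ρo v + (1 - α) * ρo w)
    (hopos : ∀ (v : Fin N → ℝ) (t : ℝ), 0 < t → ρo (t • v) = t * ρo v)
    (homono : ∀ v w : Fin N → ℝ, (∀ i, w i ≤ v i) → ρo w ≤ ρo v)
    (hotrans : ∀ (v : Fin N → ℝ) (a : ℝ), ρo (v + fun _ => a) = ρo v + a) :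
    let ρsys : (Fin N → Ω → ℝ) → ℝ := fun Z => ρo (fun i => ρi i (Z i))
    (∀ (Z W : Fin N → Ω → ℝ) (α : ℝ), 0 < α → α < 1 →
      ρsys (fun i => α • Z i + (1 - α) • W i) ≤ α * ρsys Z + (1 - α) * ρsys W) ∧
    (∀ Z W : Fin N → Ω → ℝ, (∀ i ω, W i ω ≤ Z i ω) → ρsys W ≤ ρsys Z) ∧
    (∀ (Z : Fin N → Ω → ℝ) (t : ℝ), 0 < t → ρsys (fun i => t • Z i) = t * ρsys Z) ∧
    (∀ (Z : Fin N → Ω → ℝ) (a : ℝ),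
      ρsys (fun i => Z i + fun _ => a) = ρsys Z + a * ρsys (fun _ _ => 1)) := by
  intro ρsys
  refine ⟨?_, ?_, ?_, ?_⟩
  · -- convexity
    intro Z W α hα0 hα1
    have h1 : ρsys (fun i => α • Z i + (1 - α) • W i)
        ≤ ρo (α • (fun i => ρi i (Z i)) + (1 - α) • (fun i => ρi i (W i))) := by
      apply homono
      intro i
      simpa using hiconv i (Z i) (W i) α hα0 hα1
    exact h1.trans (hoconv _ _ α hα0 hα1)
  · -- monotonicity
    intro Z W h
    exact homono _ _ fun i => himono i (Z i) (W i) (h i)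
  · -- positive homogeneity
    intro Z t ht
    have : (fun i => ρi i (t • Z i)) = t • (fun i => ρi i (Z i)) := by
      funext i; simpa using hipos i (Z i) t ht
    show ρo (fun i => ρi i (t • Z i)) = t * ρo (fun i => ρi i (Z i))
    rw [this, hopos _ t ht]
  · -- translation
    intro Z a
    have hi0 : ∀ i, ρi i (fun _ => (0:ℝ)) = 0 := by
      intro i
      have := hipos i (fun _ => (0:ℝ)) 2 (by norm_num)
      have h2 : (2:ℝ) • (fun _ : Ω => (0:ℝ)) = fun _ => (0:ℝ) := by
        funext ω; simp
      rw [h2] at this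
      linarith
    have hi1 : ∀ i, ρi i (fun _ => (1:ℝ)) = 1 := by
      intro i
      have := hitrans i (fun _ => (0:ℝ)) 1
      have h2 : (fun _ : Ω => (0:ℝ)) + (fun _ => (1:ℝ)) = fun _ => (1:ℝ) := by
        funext ω; simp
      rw [h2, hi0 i] at this
      linarith
    have ho1 : ρo (fun _ => (1:ℝ)) = 1 := by
      have h0 : ρo (fun _ => (0:ℝ)) = 0 := by
        have := hopos (fun _ => (0:ℝ)) 2 (by norm_num)
        have h2 : (2:ℝ) • (fun _ : Fin N => (0:ℝ)) = fun _ => (0:ℝ) := by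
          funext i; simp
        rw [h2] at this
        linarith
      have := hotrans (fun _ => (0:ℝ)) 1
      have h2 : (fun _ : Fin N => (0:ℝ)) + (fun _ => (1:ℝ)) = fun _ => (1:ℝ) := by
        funext i; simp
      rw [h2, h0] at this
      linarith
    have key : (fun i => ρi i (Z i + fun _ => a)) = (fun i => ρi i (Z i)) + fun _ => a := by
      funext i; simp [hitrans]
    show ρo (fun i => ρi i (Z i + fun _ => a)) = _
    rw [key, hotrans]
    have : ρsys (fun _ _ => 1) = 1 := by
      show ρo (fun i => ρi i (fun _ => (1:ℝ))) = 1
      simpa [hi1] using ho1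
    rw [this]
    ring
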